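/- arXiv:2601.20036 — 4 statements merged into one kernel-verified Lean document; each statement's English description precedes it below -/
import Mathlib

section
/- Let S be a finite set of points in the plane and let p, q be two distinct points. If a point x lies strictly to the left of the oriented line from p to q, and c is the center of the circle through p, q, x, then for any two points a, b on the perpendicular bisector of p and q such that a and b are separated by c, with a on the same side of c as points left of the line, the open disk through p and q centered at a contains x while the open disk through p and q centered at b does not. -/
/-!
Write `c` for the circumcenter of `p, q, x` and `m` for any other center on the bisector of
`p, q`. Since `c` is equidistant from `x` and `p`, the power comparison
`|mx|² - |mp|² = -2 ⟪m - c, x - p⟫` reduces the claim to the sign of `⟪m - c, x - p⟫`.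
As `m - c` is orthogonal to `q - p`, the planar Lagrange identity gives
`(cross p q m - cross p q c) · cross p q x = |pq|² ⟪m - c, x - p⟫`,
so that sign is the sign of `cross p q m - cross p q c`, because `x` lies left of `pq`.
-/

/-- The plane. -/
local notation "E" => EuclideanSpace ℝ (Fin 2)

/-- Twice the signed area of the triangle `a b c`: positive iff `c` lies strictly to the
left of the line through `a` and `b` oriented from `a` to `b`. -/
noncomputable def cross (a b c : EuclideanSpace ℝ (Fin 2)) : ℝ :=
  (b 0 - a 0) * (c 1 - a 1) - (b 1 - a 1) * (c 0 - a 0)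

open RealInnerProductSpace

section EuclideanGeometry

variable {V P : Type*} [NormedAddCommGroup V] [InnerProductSpace ℝ V] [MetricSpace P]
  [NormedAddTorsor V P]

theorem dist_sq_sub_dist_sq_of_dist_eq {c m x p : P} (h : dist c x = dist c p) :
    dist m x ^ 2 - dist m p ^ 2 = 2 * ⟪m -ᵥ c, p -ᵥ x⟫ := by
  have hx : dist m x ^ 2 = ‖m -ᵥ c‖ ^ 2 + 2 * ⟪m -ᵥ c, c -ᵥ x⟫ + dist c x ^ 2 := by
    rw [dist_eq_norm_vsub V, dist_eq_norm_vsub V, ← vsub_add_vsub_cancel m c x, norm_add_sq_real]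
  have hp : dist m p ^ 2 = ‖m -ᵥ c‖ ^ 2 + 2 * ⟪m -ᵥ c, c -ᵥ p⟫ + dist c p ^ 2 := by
    rw [dist_eq_norm_vsub V, dist_eq_norm_vsub V, ← vsub_add_vsub_cancel m c p, norm_add_sq_real]
  rw [hx, hp, h, ← vsub_sub_vsub_cancel_left p x c, inner_sub_right]
  ring

theorem dist_lt_dist_of_inner_vsub_pos {c m x p : P} (h : dist c x = dist c p)
    (hm : 0 < ⟪m -ᵥ c, x -ᵥ p⟫) : dist m x < dist m p := by
  refine lt_of_pow_lt_pow_left₀ 2 dist_nonneg ?_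
  have := dist_sq_sub_dist_sq_of_dist_eq (m := m) h
  rw [← neg_vsub_eq_vsub_rev x p, inner_neg_right] at this
  linarith

end EuclideanGeometry

theorem cross_sub_cross_mul_cross (p q m c x : E) :
    (cross p q m - cross p q c) * cross p q x =
      ‖q - p‖ ^ 2 * ⟪m - c, x - p⟫ - ⟪m - c, q - p⟫ * ⟪q - p, x - p⟫ := by
  rw [← real_inner_self_eq_norm_sq]
  simp only [cross, PiLp.inner_apply, Fin.sum_univ_two, PiLp.sub_apply, RCLike.inner_apply,
    conj_trivial]
  ring

theorem inner_sub_pos_of_cross_lt {p q x c m : E} (hc : dist c p = dist c q)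
    (hm : dist m p = dist m q) (hx : 0 < cross p q x) (h : cross p q c < cross p q m) :
    0 < ⟪m - c, x - p⟫ := by
  have hperp : ⟪m -ᵥ c, q -ᵥ p⟫ = 0 :=
    EuclideanGeometry.inner_vsub_vsub_of_dist_eq_of_dist_eq (dist_comm p c ▸ dist_comm q c ▸ hc)
      (dist_comm p m ▸ dist_comm q m ▸ hm)
  rw [vsub_eq_sub, vsub_eq_sub] at hperp
  have key := cross_sub_cross_mul_cross p q m c x
  rw [hperp, zero_mul, sub_zero] at key
  exact pos_of_mul_pos_right (key ▸ mul_pos (sub_pos.2 h) hx) (sq_nonneg _)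

theorem stmt0_general
    (p q x c a b : E)
    (hx : 0 < cross p q x)
    (hcb : dist c p = dist c q) (hcx : dist c x = dist c p)
    (ha : dist a p = dist a q) (hb : dist b p = dist b q)
    (hbc : cross p q b < cross p q c) (hca : cross p q c < cross p q a) :
    dist a x < dist a p ∧ ¬ dist b x < dist b p := by
  refine ⟨dist_lt_dist_of_inner_vsub_pos hcx (inner_sub_pos_of_cross_lt hcb ha hx hca), ?_⟩
  have hcb_inner := inner_sub_pos_of_cross_lt hb hcb hx hbc
  refine (dist_lt_dist_of_inner_vsub_pos hcx.symm ?_).asymm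
  rwa [← inner_neg_neg, neg_vsub_eq_vsub_rev, neg_vsub_eq_vsub_rev]

/-- If `x` is strictly left of the oriented line `pq`, `c` is the circumcenter of `p,q,x`,
and `a`, `b` lie on the bisector of `p,q` separated by `c` with `a` on the left side of `c`,
then the open disk through `p,q` centered at `a` contains `x` while the one centered at `b`
does not. -/
theorem stmt0 (S : Set (EuclideanSpace ℝ (Fin 2))) (hS : S.Finite)
    (p q x c a b : E) (hpq : p ≠ q)
    (hx : 0 < cross p q x)
    (hcb : dist c p = dist c q) (hcx : dist c x = dist c p)
    (ha : dist a p = dist a q) (hb : dist b p = dist b q)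
    (hbc : cross p q b < cross p q c) (hca : cross p q c < cross p q a) :
    dist a x < dist a p ∧ ¬ dist b x < dist b p :=
  stmt0_general p q x c a b hx hcb hcx ha hb hbc hca
end

section
/- Let S be a finite set of points in the plane, and let p, q ∈ S be distinct. Let D be a closed disk whose boundary passes through p and q. The chord pq divides D into two closed regions. If each of these two regions contains at least k points of S, then every closed disk containing both p and q contains at least k points of S. -/
/-!
The difference `f = D'.power - D.power` of the powers of a point with respect to the disk `D` and
a second disk `D'` is affine. It is `≤ 0` at `p` and `q`, hence on the chord `D ∩ pq = [p, q]`.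
If `f` were positive at points of `D` strictly on both sides of `pq`, it would be positive where
the segment joining them crosses the chord. So `f ≤ 0` on one of the two halves of `D`, and there
`D'.power ≤ D.power ≤ 0`: that half lies in `D'`.
-/

/-- The plane. -/
local notation "E" => EuclideanSpace ℝ (Fin 2)

open AffineMap

namespace EuclideanGeometry.Sphere

variable {V : Type*} [NormedAddCommGroup V] [InnerProductSpace ℝ V]

theorem power_lineMap (s : Sphere V) (x y : V) (t : ℝ) :
    s.power (lineMap x y t) = lineMap (s.power x) (s.power y) t - t * (1 - t) * dist x y ^ 2 := by
  have hv : lineMap x y t - s.center = (1 - t) • (x - s.center) + t • (y - s.center) := by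
    rw [lineMap_apply_module]; module
  have hxy : x - y = (x - s.center) - (y - s.center) := by abel
  simp only [power, dist_eq_norm, hv, hxy, lineMap_apply_ring, ← real_inner_self_eq_norm_sq,
    inner_add_left, inner_add_right, inner_sub_left, inner_sub_right, real_inner_smul_left,
    real_inner_smul_right, real_inner_comm (x - s.center)]
  ring

theorem power_sub_power_lineMap (s₁ s₂ : Sphere V) (x y : V) (t : ℝ) :
    s₁.power (lineMap x y t) - s₂.power (lineMap x y t) =
      lineMap (s₁.power x - s₂.power x) (s₁.power y - s₂.power y) t := by
  simp only [power_lineMap, lineMap_apply_ring]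
  ring

theorem power_le_power_of_wbtw {D D' : Sphere V} {p q z : V} (hz : Wbtw ℝ p z q)
    (hp : p ∈ D) (hq : q ∈ D) (hp' : D'.power p ≤ 0) (hq' : D'.power q ≤ 0) :
    D'.power z ≤ D.power z := by
  obtain ⟨t, ht, rfl⟩ := hz
  have hr := radius_nonneg_of_mem hp
  rw [← sub_nonpos, power_sub_power_lineMap, (power_eq_zero_iff_mem_sphere hr).2 hp,
    (power_eq_zero_iff_mem_sphere hr).2 hq, sub_zero, sub_zero]
  exact (convex_Iic (0 : ℝ)).lineMap_mem hp' hq' ht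

end EuclideanGeometry.Sphere

theorem Convex.nonpos_on_halfspace_of_nonpos_on_hyperplane {V : Type*} [AddCommGroup V]
    [Module ℝ V] {K : Set V} (hK : Convex ℝ K) {f g : V → ℝ}
    (hf : ∀ x y (t : ℝ), f (lineMap x y t) = lineMap (f x) (f y) t)
    (hg : ∀ x y (t : ℝ), g (lineMap x y t) = lineMap (g x) (g y) t)
    (hfg : ∀ z ∈ K, g z = 0 → f z ≤ 0) :
    (∀ x ∈ K, 0 ≤ g x → f x ≤ 0) ∨ (∀ x ∈ K, g x ≤ 0 → f x ≤ 0) := by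
  by_contra! ⟨⟨x, hxK, hgx₀, hfx⟩, y, hyK, hgy₀, hfy⟩
  have hgx : 0 < g x := hgx₀.lt_of_ne fun h ↦ (hfg x hxK h.symm).not_gt hfx
  have hgy : g y < 0 := hgy₀.lt_of_ne fun h ↦ (hfg y hyK h).not_gt hfy
  set t := g x / (g x - g y)
  have ht : t ∈ Set.Icc (0 : ℝ) 1 := by
    constructor
    · exact div_nonneg hgx.le (by linarith)
    · exact (div_le_one (by linarith)).2 (by linarith)
  have hgz : g (lineMap x y t) = 0 := by
    rw [hg, lineMap_apply_ring, div_mul_eq_mul_div, one_sub_div (by linarith)]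
    field_simp
    ring
  have hfz : 0 < f (lineMap x y t) := by
    rw [hf]
    exact (convex_Ioi (0 : ℝ)).lineMap_mem hfx hfy ht
  exact (hfg _ (hK.lineMap_mem hxK hyK ht) hgz).not_gt hfz

theorem cross_lineMap (p q x y : E) (t : ℝ) :
    cross p q (lineMap x y t) = lineMap (cross p q x) (cross p q y) t := by
  simp only [cross, lineMap_apply_module, PiLp.add_apply, PiLp.smul_apply, smul_eq_mul]
  ring

theorem collinear_of_cross_eq_zero {p q z : E} (h : cross p q z = 0) :
    Collinear ℝ ({p, z, q} : Set E) := by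
  rcases eq_or_ne p q with rfl | hpq
  · simpa using collinear_pair ℝ z p
  have hL : 0 < (q 0 - p 0) ^ 2 + (q 1 - p 1) ^ 2 := by
    have h := dist_pos.2 hpq
    rwa [EuclideanSpace.dist_eq, Real.sqrt_pos, Fin.sum_univ_two, Real.dist_eq, Real.dist_eq,
      sq_abs, sq_abs, ← neg_sub (q 0), ← neg_sub (q 1), neg_sq, neg_sq] at h
  set t := ((z 0 - p 0) * (q 0 - p 0) + (z 1 - p 1) * (q 1 - p 1)) /
    ((q 0 - p 0) ^ 2 + (q 1 - p 1) ^ 2)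
  unfold cross at h
  have hz : z = lineMap p q t := by
    ext i
    fin_cases i <;> simp only [lineMap_apply_module, PiLp.add_apply, PiLp.smul_apply, smul_eq_mul,
      Fin.zero_eta, Fin.mk_one, t] <;> field_simp
    · linear_combination (-(q 1 - p 1)) * h
    · linear_combination (q 0 - p 0) * h
  rw [Set.insert_comm, hz]
  exact collinear_insert_of_mem_affineSpan_pair (lineMap_mem_affineSpan_pair t p q)

open EuclideanGeometry

theorem stmt3_general (S : Set (EuclideanSpace ℝ (Fin 2))) (hS : S.Finite)
    (p q : E) (hpq : p ≠ q)
    (c : E) (r : ℝ) (hcp : dist c p = r) (hcq : dist c q = r) (k : ℕ)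
    (hleft : k ≤ (S ∩ Metric.closedBall c r ∩ {x | 0 ≤ cross p q x}).ncard)
    (hright : k ≤ (S ∩ Metric.closedBall c r ∩ {x | cross p q x ≤ 0}).ncard) :
    ∀ c' : E, ∀ r' : ℝ, p ∈ Metric.closedBall c' r' → q ∈ Metric.closedBall c' r' →
      k ≤ (S ∩ Metric.closedBall c' r').ncard := by
  intro c' r' hpc' hqc'
  let D : Sphere E := ⟨c, r⟩
  let D' : Sphere E := ⟨c', r'⟩
  have hr : 0 ≤ r := hcp ▸ dist_nonneg
  have hr' : 0 ≤ r' := dist_nonneg.trans hpc'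
  have hpD : p ∈ D := mem_sphere.2 ((dist_comm p c).trans hcp)
  have hqD : q ∈ D := mem_sphere.2 ((dist_comm q c).trans hcq)
  have hpD' : D'.power p ≤ 0 := (Sphere.power_nonpos_iff_dist_center_le_radius hr').2 hpc'
  have hqD' : D'.power q ≤ 0 := (Sphere.power_nonpos_iff_dist_center_le_radius hr').2 hqc'
  have hchord : ∀ z ∈ Metric.closedBall c r, cross p q z = 0 → D'.power z - D.power z ≤ 0 :=
    fun z hz hcross ↦ sub_nonpos.2 <| Sphere.power_le_power_of_wbtw
      (wbtw_of_collinear_of_dist_center_le_radius (collinear_of_cross_eq_zero hcross)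
        hpD hz hqD hpq)
      hpD hqD hpD' hqD'
  have hball : ∀ x ∈ Metric.closedBall c r, D'.power x - D.power x ≤ 0 →
      x ∈ Metric.closedBall c' r' :=
    fun x hx hpow ↦ (Sphere.power_nonpos_iff_dist_center_le_radius hr').1 <|
      (sub_nonpos.1 hpow).trans ((Sphere.power_nonpos_iff_dist_center_le_radius hr).2 hx)
  rcases (convex_closedBall c r).nonpos_on_halfspace_of_nonpos_on_hyperplane
    (Sphere.power_sub_power_lineMap D' D) (cross_lineMap p q) hchord with h | h
  · refine hleft.trans (Set.ncard_le_ncard ?_ (hS.inter_of_left _))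
    exact fun x ⟨⟨hxS, hxD⟩, hx⟩ ↦ ⟨hxS, hball x hxD (h x hxD hx)⟩
  · refine hright.trans (Set.ncard_le_ncard ?_ (hS.inter_of_left _))
    exact fun x ⟨⟨hxS, hxD⟩, hx⟩ ↦ ⟨hxS, hball x hxD (h x hxD hx)⟩

/-- If a closed disk `D` through `p` and `q` has at least `k` points of `S` in each of the
two regions cut off by the chord `pq`, then every closed disk containing `p` and `q`
contains at least `k` points of `S`. -/
theorem stmt3 (S : Set (EuclideanSpace ℝ (Fin 2))) (hS : S.Finite)
    (p q : E) (hp : p ∈ S) (hq : q ∈ S) (hpq : p ≠ q)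
    (c : E) (r : ℝ) (hcp : dist c p = r) (hcq : dist c q = r) (k : ℕ)
    (hleft : k ≤ (S ∩ Metric.closedBall c r ∩ {x | 0 ≤ cross p q x}).ncard)
    (hright : k ≤ (S ∩ Metric.closedBall c r ∩ {x | cross p q x ≤ 0}).ncard) :
    ∀ c' : E, ∀ r' : ℝ, p ∈ Metric.closedBall c' r' → q ∈ Metric.closedBall c' r' →
      k ≤ (S ∩ Metric.closedBall c' r').ncard :=
  stmt3_general S hS p q hpq c r hcp hcq k hleft hright
end

section
/- Let D and D' be two closed disks in the plane whose boundary circles both pass through two distinct points p and q, with centers c and c' respectively on the perpendicular bisector of p and q. If c' lies on the same side of line L(p,q) as, or further toward, the left side than c (i.e., the signed distance of c' to L(p,q) oriented from p to q is at least that of c), then every point of D lying in the closed left halfplane of L(p,q) is contained in D'. -/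
/-!
Moving the center from `c` to `c'` changes `|z - c|² - |c - p|²` by `-2⟪z - p, c' - c⟫`, so it
suffices that `⟪z - p, c' - c⟫ ≥ 0`. Since both centers lie on the bisector of `pq`, `c' - c` is a
multiple of the left normal of `pq`, with nonnegative coefficient by the hypothesis on the
centers; pairing with `z - p` then gives a multiple of `cross p q z ≥ 0`.
-/

/-- The plane. -/
local notation "E" => EuclideanSpace ℝ (Fin 2)

open RealInnerProductSpace

theorem dist_sq_sub_dist_sq {V : Type*} [NormedAddCommGroup V] [InnerProductSpace ℝ V]
    (z c c' p : V) :
    dist z c' ^ 2 - dist c' p ^ 2 = dist z c ^ 2 - dist c p ^ 2 - 2 * ⟪z - p, c' - c⟫ := by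
  have h₁ : z - c' = (z - c) - (c' - c) := by abel
  have h₂ : c' - p = (c - p) + (c' - c) := by abel
  have h₃ : z - p = (z - c) + (c - p) := by abel
  simp only [dist_eq_norm, h₁, h₂, h₃, norm_sub_sq_real, norm_add_sq_real, inner_add_left]
  ring

theorem dist_le_of_inner_nonneg {V : Type*} [NormedAddCommGroup V] [InnerProductSpace ℝ V]
    {z c c' p : V} (hz : dist z c ≤ dist c p) (h : 0 ≤ ⟪z - p, c' - c⟫) :
    dist z c' ≤ dist c' p := by
  have hsq : dist z c ^ 2 ≤ dist c p ^ 2 := pow_le_pow_left₀ dist_nonneg hz 2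
  have hshift := dist_sq_sub_dist_sq z c c' p
  exact (pow_le_pow_iff_left₀ dist_nonneg dist_nonneg two_ne_zero).mp (by linarith)

/-- Lagrange's identity in the plane: expand `z - p` and `y - x` in the orthogonal basis formed by
`q - p` and its left normal. -/
theorem norm_sq_mul_inner_eq_cross_mul_cross_add (p q x y z : E) :
    ‖q - p‖ ^ 2 * ⟪z - p, y - x⟫ =
      (cross p q y - cross p q x) * cross p q z + ⟪q - p, y - x⟫ * ⟪q - p, z - p⟫ := by
  simp only [EuclideanSpace.real_norm_sq_eq, cross, PiLp.inner_apply, Fin.sum_univ_two,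
    PiLp.sub_apply, RCLike.inner_apply, conj_trivial]
  ring

theorem inner_nonneg_of_cross_le {p q c c' z : E} (hpq : p ≠ q)
    (hc : dist c p = dist c q) (hc' : dist c' p = dist c' q)
    (h : cross p q c ≤ cross p q c') (hz : 0 ≤ cross p q z) : 0 ≤ ⟪z - p, c' - c⟫ := by
  have hperp : ⟪q - p, c' - c⟫ = 0 := by
    rw [dist_comm c, dist_comm c q] at hc
    rw [dist_comm c', dist_comm c' q] at hc'
    rw [real_inner_comm, ← vsub_eq_sub, ← vsub_eq_sub]
    exact EuclideanGeometry.inner_vsub_vsub_of_dist_eq_of_dist_eq hc hc'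
  have hpos : 0 < ‖q - p‖ ^ 2 := by
    have := sub_ne_zero.mpr hpq.symm
    positivity
  have hid := norm_sq_mul_inner_eq_cross_mul_cross_add p q c c' z
  rw [hperp, zero_mul, add_zero] at hid
  exact nonneg_of_mul_nonneg_right (hid ▸ mul_nonneg (sub_nonneg.mpr h) hz) hpos

/-- Among closed disks through `p` and `q`, if the center `c'` is at least as far to the
left of the oriented line `pq` as the center `c`, then every point of the disk centered at
`c` lying in the closed left halfplane belongs to the disk centered at `c'`. -/
theorem stmt4 (p q c c' : E) (hpq : p ≠ q)
    (hc : dist c p = dist c q) (hc' : dist c' p = dist c' q)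
    (h : cross p q c ≤ cross p q c') :
    ∀ z ∈ Metric.closedBall c (dist c p), 0 ≤ cross p q z →
      z ∈ Metric.closedBall c' (dist c' p) := fun _ hz hleft =>
  dist_le_of_inner_nonneg hz (inner_nonneg_of_cross_le hpq hc hc' h hleft)
end

section
/- Let S be a finite set of n points in the plane in general position and let p, q ∈ S be distinct. The centers of circles through p, q and a third point of S divide the bisector b(p,q) into n−1 segments. If s and s' are two adjacent segments sharing the endpoint c_i (the circumcenter of p, q, x_i), then the number of points of S in the open disk through p and q centered at any point of s' differs by exactly one from the number for s: it decreases by one when moving rightward past c_i if x_i is left of L(p,q), and increases by one if x_i is right of L(p,q). -/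
/-!
For a centre `d` on the bisector of `p q`, the power `|d z|² - |d p|²` of a point `z` is an
affine function of the signed position `cross p q d` of `d` along the bisector, with slope of
sign `-cross p q z`; when `z` is off the line `p q` it vanishes exactly at the circumcentre of
`p q z`. Hence moving the centre from `a` to `a'` changes the disk membership of `z` only if the
circumcentre of `p q z` lies in between: among the points of `S` only `x` changes, leaving the
disk when `x` is left of `p q` and entering it when `x` is right of `p q`.
-/

/-- The plane. -/
local notation "E" => EuclideanSpace ℝ (Fin 2)

lemma ncard_sep_add_one_of_iff_of_ne {α : Type*} {S : Set α} {P Q : α → Prop} {x : α}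
    (hS : S.Finite) (hx : x ∈ S) (hPx : P x) (hQx : ¬ Q x)
    (hPQ : ∀ z ∈ S, z ≠ x → (P z ↔ Q z)) :
    {z ∈ S | Q z}.ncard + 1 = {z ∈ S | P z}.ncard := by
  have hsep : {z ∈ S | P z} = insert x {z ∈ S | Q z} := by
    ext z
    by_cases hzx : z = x
    · subst hzx
      simp [hx, hPx]
    · simp only [Set.mem_sep_iff, Set.mem_insert_iff, hzx, false_or]
      exact and_congr_right fun hz => hPQ z hz hzx
  rw [hsep, Set.ncard_insert_of_notMem (fun h => hQx h.2) (hS.subset (Set.sep_subset _ _))]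

lemma dist_sq_eq_coords (u v : E) : dist u v ^ 2 = (u 0 - v 0) ^ 2 + (u 1 - v 1) ^ 2 := by
  rw [EuclideanSpace.dist_eq, Real.sq_sqrt (by positivity), Fin.sum_univ_two, Real.dist_eq,
    Real.dist_eq, sq_abs, sq_abs]

lemma dist_eq_iff_sq_eq {u v w : E} : dist u v = dist u w ↔ dist u v ^ 2 = dist u w ^ 2 :=
  (sq_eq_sq₀ dist_nonneg dist_nonneg).symm

section Bisector

variable {p q : E}

lemma power_sub_power_mul_dist_sq {d e : E} (z : E) (hd : dist d p = dist d q)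
    (he : dist e p = dist e q) :
    (dist d z ^ 2 - dist d p ^ 2 - (dist e z ^ 2 - dist e p ^ 2)) * dist p q ^ 2
      = -2 * (cross p q d - cross p q e) * cross p q z := by
  rw [dist_eq_iff_sq_eq] at hd he
  simp only [dist_sq_eq_coords, cross] at *
  linear_combination (-((q 0 - p 0) * (z 0 - p 0) + (q 1 - p 1) * (z 1 - p 1))) * hd
    + ((q 0 - p 0) * (z 0 - p 0) + (q 1 - p 1) * (z 1 - p 1)) * he

lemma power_mul_dist_sq_of_circumcenter {c d z : E} (hd : dist d p = dist d q)
    (hc : dist c p = dist c q) (hcz : dist c z = dist c p) :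
    (dist d z ^ 2 - dist d p ^ 2) * dist p q ^ 2
      = -2 * (cross p q d - cross p q c) * cross p q z := by
  rw [← power_sub_power_mul_dist_sq z hd hc, hcz]
  ring

lemma dist_lt_iff_of_circumcenter (hpq : p ≠ q) {c d z : E} (hd : dist d p = dist d q)
    (hc : dist c p = dist c q) (hcz : dist c z = dist c p) :
    dist d z < dist d p ↔ 0 < (cross p q d - cross p q c) * cross p q z := by
  have hU : 0 < dist p q ^ 2 := pow_pos (dist_pos.2 hpq) 2
  have key := power_mul_dist_sq_of_circumcenter hd hc hcz
  rw [← sq_lt_sq₀ dist_nonneg dist_nonneg]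
  constructor <;> intro h <;> nlinarith

lemma cross_ne_of_dist_ne (hpq : p ≠ q) {c d z : E} (hd : dist d p = dist d q)
    (hc : dist c p = dist c q) (hcz : dist c z = dist c p) (hdz : dist d z ≠ dist d p) :
    cross p q d ≠ cross p q c := by
  intro h
  have hU : dist p q ^ 2 ≠ 0 := pow_ne_zero 2 (dist_ne_zero.2 hpq)
  have key := power_mul_dist_sq_of_circumcenter hd hc hcz
  rw [h, sub_self, mul_zero, zero_mul, mul_eq_zero_iff_right hU, sub_eq_zero] at key
  exact hdz (dist_eq_iff_sq_eq.2 key)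

lemma exists_circumcenter {z : E} (hz : cross p q z ≠ 0) :
    ∃ c : E, dist c p = dist c q ∧ dist c z = dist c p := by
  -- `c` is the midpoint of `p q` moved by `t` times `q - p` turned by a right angle, where `t`
  -- solves the (linear) equation `|c z|² = |c p|²`.
  set t := ((((p 0 + q 0) / 2 - z 0) ^ 2 + ((p 1 + q 1) / 2 - z 1) ^ 2)
      - (((q 0 - p 0) / 2) ^ 2 + ((q 1 - p 1) / 2) ^ 2)) / (2 * cross p q z) with ht
  refine ⟨!₂[(p 0 + q 0) / 2 - t * (q 1 - p 1), (p 1 + q 1) / 2 + t * (q 0 - p 0)], ?_, ?_⟩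
    <;> rw [dist_eq_iff_sq_eq, dist_sq_eq_coords, dist_sq_eq_coords]
    <;> simp only [Matrix.cons_val_zero, Matrix.cons_val_one]
  · ring
  · rw [ht]
    unfold cross at hz ⊢
    field_simp
    ring

lemma dist_lt_iff_of_no_circumcenter_between (hpq : p ≠ q) {d e z : E}
    (hd : dist d p = dist d q) (he : dist e p = dist e q) (hed : cross p q e ≤ cross p q d)
    (hbetween : ∀ c : E, dist c p = dist c q → dist c z = dist c p →
      ¬ (cross p q e < cross p q c ∧ cross p q c < cross p q d))
    (hdz : dist d z ≠ dist d p) (hez : dist e z ≠ dist e p) :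
    dist d z < dist d p ↔ dist e z < dist e p := by
  by_cases hz : cross p q z = 0
  · have hU : dist p q ^ 2 ≠ 0 := pow_ne_zero 2 (dist_ne_zero.2 hpq)
    have key := power_sub_power_mul_dist_sq z hd he
    rw [hz, mul_zero, mul_eq_zero_iff_right hU] at key
    rw [← sq_lt_sq₀ dist_nonneg dist_nonneg, ← sq_lt_sq₀ dist_nonneg dist_nonneg]
    constructor <;> intro h <;> linarith
  · obtain ⟨c, hc, hcz⟩ := exists_circumcenter hz
    have hcd := cross_ne_of_dist_ne hpq hd hc hcz hdz
    have hce := cross_ne_of_dist_ne hpq he hc hcz hez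
    rw [dist_lt_iff_of_circumcenter hpq hd hc hcz, dist_lt_iff_of_circumcenter hpq he hc hcz]
    rcases lt_or_gt_of_ne hce with hlt | hgt
    · have hdc : cross p q d < cross p q c :=
        lt_of_le_of_ne (not_lt.1 fun h => hbetween c hc hcz ⟨hlt, h⟩) hcd
      constructor <;> intro h <;> nlinarith
    · have hdc : cross p q c < cross p q d := lt_of_le_of_ne (hgt.le.trans hed) hcd.symm
      constructor <;> intro h <;> nlinarith

end Bisector

theorem stmt5_general (S : Set (EuclideanSpace ℝ (Fin 2))) (hS : S.Finite)
    (p q : E) (hpq : p ≠ q)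
    (x c a a' : E) (hx : x ∈ S \ {p, q})
    (hcb : dist c p = dist c q) (hcx : dist c x = dist c p)
    (ha : dist a p = dist a q) (ha' : dist a' p = dist a' q)
    (h1 : cross p q a' < cross p q c) (h2 : cross p q c < cross p q a)
    (hseg : ∀ y ∈ S \ {p, q}, y ≠ x → ∀ d : E, dist d p = dist d q → dist d y = dist d p →
      ¬ (cross p q a' < cross p q d ∧ cross p q d < cross p q a))
    (hagen : ∀ y ∈ S \ {p, q}, dist a y ≠ dist a p)
    (ha'gen : ∀ y ∈ S \ {p, q}, dist a' y ≠ dist a' p) :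
    (0 < cross p q x →
      {z ∈ S | dist a' z < dist a' p}.ncard + 1 = {z ∈ S | dist a z < dist a p}.ncard) ∧
    (cross p q x < 0 →
      {z ∈ S | dist a z < dist a p}.ncard + 1 = {z ∈ S | dist a' z < dist a' p}.ncard) := by
  have hagree : ∀ z ∈ S, z ≠ x → (dist a z < dist a p ↔ dist a' z < dist a' p) := by
    intro z hz hzx
    by_cases hzpq : z ∈ ({p, q} : Set E)
    · rcases hzpq with rfl | rfl
      · simp
      · simp [ha, ha']
    · exact dist_lt_iff_of_no_circumcenter_between hpq ha ha' (h1.trans h2).le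
        (hseg z ⟨hz, hzpq⟩ hzx) (hagen z ⟨hz, hzpq⟩) (ha'gen z ⟨hz, hzpq⟩)
  have hxa : dist a x < dist a p ↔ 0 < cross p q x := by
    rw [dist_lt_iff_of_circumcenter hpq ha hcb hcx, mul_pos_iff_of_pos_left (sub_pos.2 h2)]
  have hxa' : dist a' x < dist a' p ↔ cross p q x < 0 := by
    rw [dist_lt_iff_of_circumcenter hpq ha' hcb hcx, ← smul_eq_mul,
      smul_pos_iff_of_neg_left (sub_neg.2 h1)]
  refine ⟨fun hxl => ?_, fun hxr => ?_⟩
  · exact ncard_sep_add_one_of_iff_of_ne hS hx.1 (hxa.2 hxl) (fun h => (hxa'.1 h).not_gt hxl)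
      hagree
  · exact ncard_sep_add_one_of_iff_of_ne hS hx.1 (hxa'.2 hxr) (fun h => (hxa.1 h).not_gt hxr)
      fun z hz hzx => (hagree z hz hzx).symm

/-- Let `c` be the circumcenter of `p`, `q` and a third point `x` of `S`, and let `a`, `a'`
be points of the two adjacent open segments of the bisector of `p,q` sharing the endpoint
`c` (with `a` to the left and `a'` to the right, no other circumcenter in between, and
neither `a` nor `a'` a circumcenter itself). Then the weights (numbers of points of `S` in
the open disks through `p,q` centered at `a` resp. `a'`) differ by exactly one: the weight
decreases by one moving rightward past `c` when `x` is left of the line `pq`, and increases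
by one when `x` is right of it. -/
theorem stmt5 (S : Set (EuclideanSpace ℝ (Fin 2))) (hS : S.Finite)
    (p q : E) (hp : p ∈ S) (hq : q ∈ S) (hpq : p ≠ q)
    (x c a a' : E) (hx : x ∈ S \ {p, q})
    (hcb : dist c p = dist c q) (hcx : dist c x = dist c p)
    (ha : dist a p = dist a q) (ha' : dist a' p = dist a' q)
    (h1 : cross p q a' < cross p q c) (h2 : cross p q c < cross p q a)
    (hseg : ∀ y ∈ S \ {p, q}, y ≠ x → ∀ d : E, dist d p = dist d q → dist d y = dist d p →
      ¬ (cross p q a' < cross p q d ∧ cross p q d < cross p q a))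
    (hagen : ∀ y ∈ S \ {p, q}, dist a y ≠ dist a p)
    (ha'gen : ∀ y ∈ S \ {p, q}, dist a' y ≠ dist a' p) :
    (0 < cross p q x →
      {z ∈ S | dist a' z < dist a' p}.ncard + 1 = {z ∈ S | dist a z < dist a p}.ncard) ∧
    (cross p q x < 0 →
      {z ∈ S | dist a z < dist a p}.ncard + 1 = {z ∈ S | dist a' z < dist a' p}.ncard) :=
  stmt5_general S hS p q hpq x c a a' hx hcb hcx ha ha' h1 h2 hseg hagen ha'gen
end
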